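/- arXiv:2410.00971 — 5 statements merged into one kernel-verified Lean document; each statement's English description precedes it below -/
import Mathlib

section
/- Theorem 1 (limit of the ridge estimator in GLMs with canonical link). Assume XX' is invertible (rank(XX') = n) and g(y) is defined. For each λ > 0 let β_λ denote the unique global minimizer of the ridge objective f_λ over ℝ^p. Then β_λ converges to X'(XX')⁻¹ g(y) as λ → 0⁺. -/
open Matrix Filter Topology

/-- The quasi log-likelihood of the intercept-free GLM with canonical link:
`ℓ̃(β) = ∑ i (y_i x_i'β − b(x_i'β))`. -/
noncomputable def glmLogLik {n p : ℕ} (X : Matrix (Fin n) (Fin p) ℝ) (y : Fin n → ℝ)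
    (b : ℝ → ℝ) (β : Fin p → ℝ) : ℝ :=
  ∑ i, (y i * (X *ᵥ β) i - b ((X *ᵥ β) i))

/-- The ridge objective `f_λ(β) = −ℓ̃(β) + (λ/2)‖β‖₂²`. -/
noncomputable def ridgeObj {n p : ℕ} (X : Matrix (Fin n) (Fin p) ℝ) (y : Fin n → ℝ)
    (b : ℝ → ℝ) (lam : ℝ) (β : Fin p → ℝ) : ℝ :=
  -(glmLogLik X y b β) + lam / 2 * ∑ j, β j ^ 2

lemma phi_lt {b : ℝ → ℝ} (hb : ContDiff ℝ 2 b) (hb'' : ∀ θ, 0 < deriv (deriv b) θ)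
    {yi θ0 : ℝ} (h0 : deriv b θ0 = yi) {θ : ℝ} (hθ : θ ≠ θ0) :
    yi * θ - b θ < yi * θ0 - b θ0 := by
  have hbd : Differentiable ℝ b := hb.differentiable (by norm_num)
  have hmono : StrictMono (deriv b) := strictMono_of_deriv_pos hb''
  set φ : ℝ → ℝ := fun t => yi * t - b t with hφ
  have hdφ : ∀ t, HasDerivAt φ (yi - deriv b t) t := by
    intro t
    have := ((hasDerivAt_id t).const_mul yi).sub (hbd t).hasDerivAt
    exact this.congr_deriv (by ring)
  have hcont : Continuous φ := (continuous_const.mul continuous_id).sub hb.continuous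
  rcases lt_or_gt_of_ne hθ with h | h
  · have hm : StrictMonoOn φ (Set.Iic θ0) := by
      apply strictMonoOn_of_deriv_pos (convex_Iic θ0) hcont.continuousOn
      intro x hx
      rw [interior_Iic] at hx
      rw [(hdφ x).deriv]
      have : deriv b x < yi := h0 ▸ hmono hx
      linarith
    exact hm (le_of_lt h) (le_refl θ0) h
  · have hm : StrictAntiOn φ (Set.Ici θ0) := by
      apply strictAntiOn_of_deriv_neg (convex_Ici θ0) hcont.continuousOn
      intro x hx
      rw [interior_Ici] at hx
      rw [(hdφ x).deriv]
      have : yi < deriv b x := h0 ▸ hmono hx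
      linarith
    exact hm (le_refl θ0) (le_of_lt h) h


lemma mulVec_betastar {n p : ℕ} (X : Matrix (Fin n) (Fin p) ℝ) (hX : IsUnit (X * Xᵀ))
    (gy : Fin n → ℝ) : X *ᵥ ((Xᵀ * (X * Xᵀ)⁻¹) *ᵥ gy) = gy := by
  rw [mulVec_mulVec, ← Matrix.mul_assoc,
    Matrix.mul_nonsing_inv _ ((Matrix.isUnit_iff_isUnit_det _).mp hX), one_mulVec]

lemma minnorm {n p : ℕ} (X : Matrix (Fin n) (Fin p) ℝ) (hX : IsUnit (X * Xᵀ))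
    (gy : Fin n → ℝ) (c : Fin p → ℝ) (hc : X *ᵥ c = gy)
    (hS : ∑ j, c j ^ 2 ≤ ∑ j, ((Xᵀ * (X * Xᵀ)⁻¹) *ᵥ gy) j ^ 2) :
    c = (Xᵀ * (X * Xᵀ)⁻¹) *ᵥ gy := by
  set βs := (Xᵀ * (X * Xᵀ)⁻¹) *ᵥ gy with hβs
  set v : Fin p → ℝ := c - βs with hv
  have hXv : X *ᵥ v = 0 := by
    rw [hv, mulVec_sub, hc, mulVec_betastar X hX gy, sub_self]
  have hdot : βs ⬝ᵥ v = 0 := by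
    have h1 : βs ⬝ᵥ v = ((X * Xᵀ)⁻¹ *ᵥ gy) ⬝ᵥ (X *ᵥ v) := by
      rw [hβs, ← mulVec_mulVec, mulVec_transpose]; exact (dotProduct_mulVec _ X _).symm
    rw [h1, hXv, dotProduct_zero]
  have hexp : ∑ j, c j ^ 2 = (∑ j, βs j ^ 2) + 2 * (βs ⬝ᵥ v) + ∑ j, v j ^ 2 := by
    have : ∀ j, c j = βs j + v j := by intro j; simp [hv]
    simp only [dotProduct, Finset.mul_sum]
    rw [← Finset.sum_add_distrib, ← Finset.sum_add_distrib]
    apply Finset.sum_congr rfl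
    intro j _
    rw [this j]; ring
  have hv0 : ∑ j, v j ^ 2 ≤ 0 := by rw [hexp, hdot] at hS; linarith
  have : ∀ j, v j = 0 := by
    intro j
    have hnn : ∀ j ∈ Finset.univ, (0:ℝ) ≤ v j ^ 2 := fun j _ => sq_nonneg _
    have := (Finset.sum_eq_zero_iff_of_nonneg hnn).mp
      (le_antisymm hv0 (Finset.sum_nonneg hnn))
    exact pow_eq_zero_iff (two_ne_zero) |>.mp (this j (Finset.mem_univ j))
  have : v = 0 := funext this
  have := sub_eq_zero.mp (hv ▸ this)
  exact this

lemma phi_le {b : ℝ → ℝ} (hb : ContDiff ℝ 2 b) (hb'' : ∀ θ, 0 < deriv (deriv b) θ)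
    {yi θ0 : ℝ} (h0 : deriv b θ0 = yi) (θ : ℝ) :
    yi * θ - b θ ≤ yi * θ0 - b θ0 := by
  rcases eq_or_ne θ θ0 with h | h
  · rw [h]
  · exact (phi_lt hb hb'' h0 h).le

lemma loglik_le {n p : ℕ} (X : Matrix (Fin n) (Fin p) ℝ) (y : Fin n → ℝ)
    {b : ℝ → ℝ} (hb : ContDiff ℝ 2 b) (hb'' : ∀ θ, 0 < deriv (deriv b) θ)
    {gy : Fin n → ℝ} (hgy : ∀ i, deriv b (gy i) = y i) (β : Fin p → ℝ) :
    glmLogLik X y b β ≤ ∑ i, (y i * gy i - b (gy i)) :=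
  Finset.sum_le_sum fun i _ => phi_le hb hb'' (hgy i) _

lemma loglik_lt {n p : ℕ} (X : Matrix (Fin n) (Fin p) ℝ) (y : Fin n → ℝ)
    {b : ℝ → ℝ} (hb : ContDiff ℝ 2 b) (hb'' : ∀ θ, 0 < deriv (deriv b) θ)
    {gy : Fin n → ℝ} (hgy : ∀ i, deriv b (gy i) = y i) {β : Fin p → ℝ}
    (h : X *ᵥ β ≠ gy) :
    glmLogLik X y b β < ∑ i, (y i * gy i - b (gy i)) := by
  obtain ⟨i, hi⟩ := Function.ne_iff.mp h
  exact Finset.sum_lt_sum (fun i _ => phi_le hb hb'' (hgy i) _)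
    ⟨i, Finset.mem_univ i, phi_lt hb hb'' (hgy i) hi⟩

lemma cont_loglik {n p : ℕ} (X : Matrix (Fin n) (Fin p) ℝ) (y : Fin n → ℝ)
    {b : ℝ → ℝ} (hb : ContDiff ℝ 2 b) : Continuous (glmLogLik X y b) := by
  apply continuous_finset_sum
  intro i _
  have hm : Continuous fun β : Fin p → ℝ => (X *ᵥ β) i := by
    simp only [mulVec, dotProduct]
    exact continuous_finset_sum _ fun j _ => continuous_const.mul (continuous_apply j)
  exact (continuous_const.mul hm).sub (hb.continuous.comp hm)


/-- Theorem 1: the ridge estimator in a GLM with canonical link converges to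
`X'(XX')⁻¹ g(y)` as the penalty tends to zero from above. -/
theorem ridge_limit_holp_glm {n p : ℕ} (X : Matrix (Fin n) (Fin p) ℝ) (y : Fin n → ℝ)
    (b : ℝ → ℝ) (hb : ContDiff ℝ 2 b) (hb'' : ∀ θ : ℝ, 0 < deriv (deriv b) θ)
    (hX : IsUnit (X * Xᵀ))
    (gy : Fin n → ℝ) (hgy : ∀ i, deriv b (gy i) = y i)
    (βlam : ℝ → Fin p → ℝ)
    (hmin : ∀ lam : ℝ, 0 < lam → ∀ β : Fin p → ℝ,
      ridgeObj X y b lam (βlam lam) ≤ ridgeObj X y b lam β)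
    (huniq : ∀ lam : ℝ, 0 < lam → ∀ β : Fin p → ℝ,
      (∀ β' : Fin p → ℝ, ridgeObj X y b lam β ≤ ridgeObj X y b lam β') → β = βlam lam) :
    Tendsto βlam (𝓝[>] (0 : ℝ)) (𝓝 ((Xᵀ * (X * Xᵀ)⁻¹) *ᵥ gy)) := by
  have hβsX : X *ᵥ ((Xᵀ * (X * Xᵀ)⁻¹) *ᵥ gy) = gy := mulVec_betastar X hX gy
  set βs : Fin p → ℝ := (Xᵀ * (X * Xᵀ)⁻¹) *ᵥ gy with hβsdef
  have hLβs : glmLogLik X y b βs = ∑ i, (y i * gy i - b (gy i)) := by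
    rw [glmLogLik, hβsX]
  have hSnn : ∀ β : Fin p → ℝ, (0:ℝ) ≤ ∑ j, β j ^ 2 :=
    fun β => Finset.sum_nonneg fun j _ => sq_nonneg _
  -- likelihood comparison
  have hLle : ∀ β : Fin p → ℝ, glmLogLik X y b β ≤ glmLogLik X y b βs := by
    intro β; rw [hLβs]; exact loglik_le X y hb hb'' hgy β
  -- norm bound
  have hSle : ∀ lam : ℝ, 0 < lam → ∑ j, (βlam lam) j ^ 2 ≤ ∑ j, βs j ^ 2 := by
    intro lam hl
    have hm := hmin lam hl βs
    simp only [ridgeObj] at hm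
    have hle := hLle (βlam lam)
    have h2 : lam / 2 * ∑ j, (βlam lam) j ^ 2 ≤ lam / 2 * ∑ j, βs j ^ 2 := by linarith
    exact le_of_mul_le_mul_left h2 (by positivity)
  -- lower bound for likelihood
  have hLlow : ∀ lam : ℝ, 0 < lam →
      glmLogLik X y b βs - lam / 2 * ∑ j, βs j ^ 2 ≤ glmLogLik X y b (βlam lam) := by
    intro lam hl
    have hm := hmin lam hl βs
    simp only [ridgeObj] at hm
    have h1 : 0 ≤ lam / 2 * ∑ j, (βlam lam) j ^ 2 :=
      mul_nonneg (by positivity) (hSnn _)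
    linarith
  -- squeeze
  have hLtend : Tendsto (fun lam => glmLogLik X y b (βlam lam)) (𝓝[>] (0:ℝ))
      (𝓝 (glmLogLik X y b βs)) := by
    apply tendsto_of_tendsto_of_tendsto_of_le_of_le'
      (g := fun lam : ℝ => glmLogLik X y b βs - lam / 2 * ∑ j, βs j ^ 2)
      (h := fun _ : ℝ => glmLogLik X y b βs)
    · have hc : Continuous fun lam : ℝ =>
          glmLogLik X y b βs - lam / 2 * ∑ j, βs j ^ 2 := by
        apply continuous_const.sub
        exact (continuous_id.div_const 2).mul continuous_const
      have := (hc.tendsto 0).mono_left (nhdsWithin_le_nhds (s := Set.Ioi (0:ℝ)))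
      simpa using this
    · exact tendsto_const_nhds
    · filter_upwards [self_mem_nhdsWithin] with lam hl using hLlow lam hl
    · filter_upwards [self_mem_nhdsWithin] with lam hl using hLle (βlam lam)
  -- compact set
  set K : Set (Fin p → ℝ) := {β | ∑ j, β j ^ 2 ≤ ∑ j, βs j ^ 2} with hKdef
  have hScont : Continuous fun β : Fin p → ℝ => ∑ j, β j ^ 2 :=
    continuous_finset_sum _ fun j _ => (continuous_apply j).pow 2
  have hKclosed : IsClosed K := isClosed_le hScont continuous_const
  have hKcpt : IsCompact K := by
    apply IsCompact.of_isClosed_subset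
      (isCompact_closedBall (0 : Fin p → ℝ) (Real.sqrt (∑ j, βs j ^ 2))) hKclosed
    intro β hβ
    rw [Metric.mem_closedBall, dist_zero_right]
    rw [pi_norm_le_iff_of_nonneg (Real.sqrt_nonneg _)]
    intro j
    rw [Real.norm_eq_abs, ← Real.sqrt_sq_eq_abs]
    exact Real.sqrt_le_sqrt (le_trans
      (Finset.single_le_sum (fun k _ => sq_nonneg (β k)) (Finset.mem_univ j)) hβ)
  have hmem : ∀ᶠ lam in 𝓝[>] (0:ℝ), βlam lam ∈ K := by
    filter_upwards [self_mem_nhdsWithin] with lam hl using hSle lam hl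
  apply hKcpt.tendsto_nhds_of_unique_mapClusterPt hmem
  intro c hcK hclust
  -- L c = L βs
  have hLc : glmLogLik X y b c = glmLogLik X y b βs := by
    have h1 : ClusterPt (glmLogLik X y b c)
        (map (fun lam => glmLogLik X y b (βlam lam)) (𝓝[>] (0:ℝ))) := by
      refine ClusterPt.map hclust ((cont_loglik X y hb).continuousAt) ?_
      rw [tendsto_map'_iff]
      exact tendsto_map
    have h2 : ClusterPt (glmLogLik X y b c) (𝓝 (glmLogLik X y b βs)) :=
      h1.mono hLtend
    exact eq_of_nhds_neBot h2
  have hXc : X *ᵥ c = gy := by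
    by_contra h
    have := loglik_lt X y hb hb'' hgy h
    rw [← hLβs, hLc] at this
    exact lt_irrefl _ this
  exact minnorm X hX gy c hXc hcK
end

section
/- Lemma 1. Assume XX' is invertible (rank(XX') = n) and g(y) is defined. For each λ > 0 let β_λ denote the unique global minimizer of the ridge objective f_λ over ℝ^p. Then λ β_λ → 0 (the zero vector in ℝ^p) as λ → 0⁺. -/
open Matrix Filter Topology

/-- Tangent line inequality for a differentiable convex function on `ℝ`. -/
lemma tangent_le_of_convex {b : ℝ → ℝ} (hb : Differentiable ℝ b)
    (hc : ConvexOn ℝ Set.univ b) (t θ : ℝ) :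
    deriv b t * (θ - t) ≤ b θ - b t := by
  rcases lt_trichotomy t θ with h | h | h
  · have := hc.deriv_le_slope (Set.mem_univ t) (Set.mem_univ θ) h (hb t)
    rw [slope_def_field] at this
    have ht : (0:ℝ) < θ - t := by linarith
    rw [le_div_iff₀ ht] at this
    linarith
  · simp [h]
  · have := hc.slope_le_deriv (Set.mem_univ θ) (Set.mem_univ t) h (hb t)
    rw [slope_def_field] at this
    have ht : (0:ℝ) < t - θ := by linarith
    rw [div_le_iff₀ ht] at this
    nlinarith

/-- Lemma 1: `λ β_λ → 0` as `λ → 0⁺`. -/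
theorem lambda_smul_ridge_tendsto_zero {n p : ℕ} (X : Matrix (Fin n) (Fin p) ℝ) (y : Fin n → ℝ)
    (b : ℝ → ℝ) (hb : ContDiff ℝ 2 b) (hb'' : ∀ θ : ℝ, 0 < deriv (deriv b) θ)
    (hX : IsUnit (X * Xᵀ))
    (gy : Fin n → ℝ) (hgy : ∀ i, deriv b (gy i) = y i)
    (βlam : ℝ → Fin p → ℝ)
    (hmin : ∀ lam : ℝ, 0 < lam → ∀ β : Fin p → ℝ,
      ridgeObj X y b lam (βlam lam) ≤ ridgeObj X y b lam β)
    (huniq : ∀ lam : ℝ, 0 < lam → ∀ β : Fin p → ℝ,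
      (∀ β' : Fin p → ℝ, ridgeObj X y b lam β ≤ ridgeObj X y b lam β') → β = βlam lam) :
    Tendsto (fun lam : ℝ => lam • βlam lam) (𝓝[>] (0 : ℝ)) (𝓝 (0 : Fin p → ℝ)) := by
  -- b is differentiable and convex
  have hbd : Differentiable ℝ b := hb.differentiable (by norm_num)
  have hbd' : Differentiable ℝ (deriv b) := (hb.iterate_deriv' 1 1).differentiable (by norm_num)
  have hconv : ConvexOn ℝ Set.univ b :=
    convexOn_univ_of_deriv2_nonneg hbd hbd' (fun x => (hb'' x).le)
  -- a preimage of gy under X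
  have hdet : IsUnit (X * Xᵀ).det := (Matrix.isUnit_iff_isUnit_det _).mp hX
  set β₀ : Fin p → ℝ := Xᵀ *ᵥ ((X * Xᵀ)⁻¹ *ᵥ gy) with hβ₀
  have hXβ₀ : X *ᵥ β₀ = gy := by
    rw [hβ₀, Matrix.mulVec_mulVec, Matrix.mulVec_mulVec, Matrix.mul_nonsing_inv _ hdet,
      Matrix.one_mulVec]
  -- β₀ maximizes the log-likelihood
  have hL : ∀ β : Fin p → ℝ, glmLogLik X y b β ≤ glmLogLik X y b β₀ := by
    intro β
    unfold glmLogLik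
    rw [hXβ₀]
    refine Finset.sum_le_sum fun i _ => ?_
    have := tangent_le_of_convex hbd hconv (gy i) ((X *ᵥ β) i)
    rw [hgy i] at this
    nlinarith
  -- squared norm bound
  set C : ℝ := Real.sqrt (∑ j, β₀ j ^ 2) with hC
  have hbound : ∀ lam : ℝ, 0 < lam → ‖βlam lam‖ ≤ C := by
    intro lam hlam
    have h1 := hmin lam hlam β₀
    unfold ridgeObj at h1
    have hL1 := hL (βlam lam)
    have hS : ∑ j, βlam lam j ^ 2 ≤ ∑ j, β₀ j ^ 2 := by
      have h2 : lam / 2 * ∑ j, βlam lam j ^ 2 ≤ lam / 2 * ∑ j, β₀ j ^ 2 := by linarith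
      exact le_of_mul_le_mul_left h2 (by linarith)
    have hCnn : 0 ≤ C := Real.sqrt_nonneg _
    rw [pi_norm_le_iff_of_nonneg hCnn]
    intro j
    have hsq : βlam lam j ^ 2 ≤ ∑ k, β₀ k ^ 2 := by
      calc βlam lam j ^ 2 ≤ ∑ k, βlam lam k ^ 2 :=
            Finset.single_le_sum (f := fun k => βlam lam k ^ 2) (fun k _ => sq_nonneg _) (Finset.mem_univ j)
        _ ≤ _ := hS
    rw [Real.norm_eq_abs, ← Real.sqrt_sq_eq_abs]
    exact Real.sqrt_le_sqrt hsq
  -- conclude by squeezing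
  have hg : Tendsto (fun lam : ℝ => lam * C) (𝓝[>] (0:ℝ)) (𝓝 0) := by
    have : Tendsto (fun lam : ℝ => lam * C) (𝓝 (0:ℝ)) (𝓝 (0 * C)) :=
      (continuous_id.mul continuous_const).tendsto 0
    rw [zero_mul] at this
    exact this.mono_left nhdsWithin_le_nhds
  refine squeeze_zero_norm' ?_ hg
  filter_upwards [self_mem_nhdsWithin] with lam (hlam : 0 < lam)
  rw [norm_smul, Real.norm_eq_abs, abs_of_pos hlam]
  exact mul_le_mul_of_nonneg_left (hbound lam hlam) hlam.le
end

section
/- Strengthened form of Lemma 1 (proved in the paper). Assume XX' is invertible (rank(XX') = n) and g(y) is defined. For each λ > 0 let β_λ denote the unique global minimizer of the ridge objective f_λ over ℝ^p. Then λ ‖β_λ‖₂² → 0 as λ → 0⁺. -/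
open Matrix Filter Topology

/-- Tangent-line inequality: a strictly convex `b` lies above its tangent at `c`. -/
lemma tangent_min (b : ℝ → ℝ) (hb : ContDiff ℝ 2 b) (hb'' : ∀ θ : ℝ, 0 < deriv (deriv b) θ)
    (c θ : ℝ) : b c - deriv b c * c ≤ b θ - deriv b c * θ := by
  set k := deriv b c with hk
  set h : ℝ → ℝ := fun t => b t - k * t with hh
  have hbd : Differentiable ℝ b := hb.differentiable (by norm_num)
  have hdm : StrictMono (deriv b) := strictMono_of_deriv_pos hb''
  have hder : ∀ x, deriv h x = deriv b x - k := by
    intro x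
    have H : HasDerivAt h (deriv b x - k * 1) x :=
      (hbd x).hasDerivAt.sub ((hasDerivAt_id x).const_mul k)
    simpa using H.deriv
  have hcont : Continuous h := (hbd.continuous).sub (continuous_const.mul continuous_id)
  have key : h c ≤ h θ := by
    rcases lt_trichotomy θ c with hlt | heq | hgt
    · have hanti := strictAntiOn_of_deriv_neg (convex_Iic c) hcont.continuousOn
        (fun x hx => by
          rw [interior_Iic] at hx
          rw [hder]
          have := hdm hx
          linarith)
      exact (hanti (Set.mem_Iic.mpr hlt.le) (Set.mem_Iic.mpr le_rfl) hlt).le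
    · simp [heq]
    · have hmono := strictMonoOn_of_deriv_pos (convex_Ici c) hcont.continuousOn
        (fun x hx => by
          rw [interior_Ici] at hx
          rw [hder]
          have := hdm hx
          linarith)
      exact (hmono (Set.mem_Ici.mpr le_rfl) (Set.mem_Ici.mpr hgt.le) hgt).le
  simpa [hh] using key

/-- Strengthened Lemma 1: `λ‖β_λ‖₂² → 0` as `λ → 0⁺`. -/
theorem lambda_mul_sq_norm_ridge_tendsto_zero {n p : ℕ} (X : Matrix (Fin n) (Fin p) ℝ)
    (y : Fin n → ℝ)
    (b : ℝ → ℝ) (hb : ContDiff ℝ 2 b) (hb'' : ∀ θ : ℝ, 0 < deriv (deriv b) θ)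
    (hX : IsUnit (X * Xᵀ))
    (gy : Fin n → ℝ) (hgy : ∀ i, deriv b (gy i) = y i)
    (βlam : ℝ → Fin p → ℝ)
    (hmin : ∀ lam : ℝ, 0 < lam → ∀ β : Fin p → ℝ,
      ridgeObj X y b lam (βlam lam) ≤ ridgeObj X y b lam β)
    (huniq : ∀ lam : ℝ, 0 < lam → ∀ β : Fin p → ℝ,
      (∀ β' : Fin p → ℝ, ridgeObj X y b lam β ≤ ridgeObj X y b lam β') → β = βlam lam) :
    Tendsto (fun lam : ℝ => lam * ∑ j, βlam lam j ^ 2) (𝓝[>] (0 : ℝ)) (𝓝 (0 : ℝ)) := by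
  set A := X * Xᵀ with hA
  have hdet : IsUnit A.det := (Matrix.isUnit_iff_isUnit_det A).mp hX
  set βstar : Fin p → ℝ := Xᵀ *ᵥ (A⁻¹ *ᵥ gy) with hβstar
  have hXβ : X *ᵥ βstar = gy := by
    rw [hβstar, mulVec_mulVec, mulVec_mulVec, ← hA,
      Matrix.mul_nonsing_inv A hdet, one_mulVec]
  have hℓ : ∀ β : Fin p → ℝ, glmLogLik X y b β ≤ glmLogLik X y b βstar := by
    intro β
    unfold glmLogLik
    apply Finset.sum_le_sum
    intro i _
    rw [hXβ]
    have := tangent_min b hb hb'' (gy i) ((X *ᵥ β) i)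
    rw [hgy i] at this
    linarith
  set C := ∑ j, βstar j ^ 2 with hC
  have hC0 : 0 ≤ C := Finset.sum_nonneg fun j _ => sq_nonneg _
  have hub : ∀ lam : ℝ, 0 < lam → lam * ∑ j, βlam lam j ^ 2 ≤ lam * C := by
    intro lam hlam
    have h1 := hmin lam hlam βstar
    have h2 := hℓ (βlam lam)
    unfold ridgeObj at h1
    nlinarith
  have hlb : ∀ lam : ℝ, 0 < lam → 0 ≤ lam * ∑ j, βlam lam j ^ 2 := fun lam hlam =>
    mul_nonneg hlam.le (Finset.sum_nonneg fun j _ => sq_nonneg _)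
  have htop : Tendsto (fun lam : ℝ => lam * C) (𝓝[>] (0 : ℝ)) (𝓝 (0 : ℝ)) := by
    have : Tendsto (fun lam : ℝ => lam * C) (𝓝 (0 : ℝ)) (𝓝 (0 * C)) :=
      (continuous_id.mul continuous_const).tendsto 0
    simpa using this.mono_left nhdsWithin_le_nhds
  refine tendsto_of_tendsto_of_tendsto_of_le_of_le' tendsto_const_nhds htop ?_ ?_
  · exact eventually_nhdsWithin_of_forall fun lam hlam => hlb lam hlam
  · exact eventually_nhdsWithin_of_forall fun lam hlam => hub lam hlam
end

section
/- Vanishing score at the limit. Assume XX' is invertible (rank(XX') = n) and g(y) is defined. For each λ > 0 let β_λ denote the unique global minimizer of the ridge objective f_λ over ℝ^p. Then X'(b'(Xβ_λ) − y) → 0 (the zero vector in ℝ^p) as λ → 0⁺. -/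
open Matrix Filter Topology

/-- tangent-line inequality for convex b -/
lemma tangent_le (b : ℝ → ℝ) (hb : ContDiff ℝ 2 b) (hb'' : ∀ θ : ℝ, 0 < deriv (deriv b) θ)
    (θs θ y0 : ℝ) (hy : deriv b θs = y0) : y0 * θ - b θ ≤ y0 * θs - b θs := by
  have hdiff : Differentiable ℝ b := hb.differentiable (by norm_num)
  have hmono : StrictMono (deriv b) := strictMono_of_deriv_pos hb''
  rcases lt_trichotomy θ θs with h | h | h
  · obtain ⟨c, hc, hceq⟩ := exists_hasDerivAt_eq_slope b (deriv b) h
      (hdiff.continuous.continuousOn) (fun x _ => (hdiff x).hasDerivAt)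
    have hlt : deriv b c < y0 := hy ▸ hmono hc.2
    have : (b θs - b θ) / (θs - θ) < y0 := hceq ▸ hlt
    have h2 : b θs - b θ < y0 * (θs - θ) := by
      rwa [div_lt_iff₀ (by linarith)] at this
    linarith
  · simp [h]
  · obtain ⟨c, hc, hceq⟩ := exists_hasDerivAt_eq_slope b (deriv b) h
      (hdiff.continuous.continuousOn) (fun x _ => (hdiff x).hasDerivAt)
    have hlt : y0 < deriv b c := hy ▸ hmono hc.1
    have : y0 < (b θ - b θs) / (θ - θs) := hceq ▸ hlt
    have h2 : y0 * (θ - θs) < b θ - b θs := by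
      rwa [lt_div_iff₀ (by linarith)] at this
    linarith

/-- stationarity: at a global minimizer, the score equals `-lam • β`. -/
lemma stationary {n p : ℕ} (X : Matrix (Fin n) (Fin p) ℝ) (y : Fin n → ℝ)
    (b : ℝ → ℝ) (hb : ContDiff ℝ 2 b) (lam : ℝ) (β : Fin p → ℝ)
    (hmin : ∀ β' : Fin p → ℝ, ridgeObj X y b lam β ≤ ridgeObj X y b lam β')
    (j : Fin p) :
    ∑ i, X i j * (deriv b ((X *ᵥ β) i) - y i) = -(lam * β j) := by
  have hdiff : Differentiable ℝ b := hb.differentiable (by norm_num)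
  set e : Fin p → ℝ := Pi.single j (1:ℝ) with he
  set F : ℝ → ℝ := fun t =>
    -(∑ i, (y i * ((X *ᵥ β) i + t * X i j) - b ((X *ᵥ β) i + t * X i j)))
      + lam / 2 * ∑ k, (β k + t * e k) ^ 2 with hF
  have hFe : ∀ t, F t = ridgeObj X y b lam (β + t • e) := by
    intro t
    have h1 : X *ᵥ (β + t • e) = fun i => (X *ᵥ β) i + t * X i j := by
      funext i
      simp [Matrix.mulVec_add, Matrix.mulVec_smul, he, Matrix.mulVec_single]
    simp only [ridgeObj, glmLogLik, h1, hF]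
    have h2 : ∀ k, (β + t • e) k ^ 2 = (β k + t * e k) ^ 2 := by
      intro k; simp [Pi.add_apply, Pi.smul_apply, smul_eq_mul]
    rw [Finset.sum_congr rfl (fun k _ => h2 k)]
  have hlocmin : IsLocalMin F 0 := by
    apply Filter.Eventually.of_forall
    intro t
    rw [hFe t, hFe 0]
    simpa using hmin (β + t • e)
  have hD : HasDerivAt F
      (-(∑ i, (y i * X i j - deriv b ((X *ᵥ β) i + 0 * X i j) * X i j))
        + lam / 2 * ∑ k, (2 * (β k + 0 * e k) * e k)) 0 := by
    apply HasDerivAt.add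
    · apply HasDerivAt.neg
      apply HasDerivAt.fun_sum
      intro i _
      have h1 : HasDerivAt (fun t : ℝ => (X *ᵥ β) i + t * X i j) (X i j) 0 := by
        simpa using ((hasDerivAt_id (0:ℝ)).mul_const (X i j)).const_add ((X *ᵥ β) i)
      have h2 : HasDerivAt (fun t : ℝ => y i * ((X *ᵥ β) i + t * X i j)) (y i * X i j) 0 := by
        simpa using h1.const_mul (y i)
      have h3 : HasDerivAt (fun t : ℝ => b ((X *ᵥ β) i + t * X i j))
          (deriv b ((X *ᵥ β) i + 0 * X i j) * X i j) 0 :=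
        (hdiff _).hasDerivAt.comp 0 h1
      exact h2.sub h3
    · apply HasDerivAt.const_mul
      apply HasDerivAt.fun_sum
      intro k _
      have h1 : HasDerivAt (fun t : ℝ => β k + t * e k) (e k) 0 := by
        simpa using ((hasDerivAt_id (0:ℝ)).mul_const (e k)).const_add (β k)
      have := h1.fun_pow 2
      simpa using this
  have hzero := hlocmin.hasDerivAt_eq_zero hD
  have hsum : ∑ k, (2 * (β k + 0 * e k) * e k) = 2 * β j := by
    simp [he, Pi.single_apply, mul_ite, Finset.mul_sum]
  rw [hsum] at hzero
  simp only [zero_mul, add_zero] at hzero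
  have : ∑ i, X i j * (deriv b ((X *ᵥ β) i) - y i)
      = -(∑ i, (y i * X i j - deriv b ((X *ᵥ β) i) * X i j)) := by
    rw [← Finset.sum_neg_distrib]
    apply Finset.sum_congr rfl
    intro i _
    ring
  rw [this]
  linarith

/-- Vanishing score at the limit: `X'(b'(Xβ_λ) − y) → 0` as `λ → 0⁺`. -/
theorem ridge_score_tendsto_zero {n p : ℕ} (X : Matrix (Fin n) (Fin p) ℝ) (y : Fin n → ℝ)
    (b : ℝ → ℝ) (hb : ContDiff ℝ 2 b) (hb'' : ∀ θ : ℝ, 0 < deriv (deriv b) θ)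
    (hX : IsUnit (X * Xᵀ))
    (gy : Fin n → ℝ) (hgy : ∀ i, deriv b (gy i) = y i)
    (βlam : ℝ → Fin p → ℝ)
    (hmin : ∀ lam : ℝ, 0 < lam → ∀ β : Fin p → ℝ,
      ridgeObj X y b lam (βlam lam) ≤ ridgeObj X y b lam β)
    (huniq : ∀ lam : ℝ, 0 < lam → ∀ β : Fin p → ℝ,
      (∀ β' : Fin p → ℝ, ridgeObj X y b lam β ≤ ridgeObj X y b lam β') → β = βlam lam) :
    Tendsto (fun lam : ℝ => Xᵀ *ᵥ (fun i => deriv b ((X *ᵥ βlam lam) i) - y i))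
      (𝓝[>] (0 : ℝ)) (𝓝 (0 : Fin p → ℝ)) := by
  -- β* with X β* = gy
  set βs : Fin p → ℝ := Xᵀ *ᵥ ((X * Xᵀ)⁻¹ *ᵥ gy) with hβs
  have hXβs : X *ᵥ βs = gy := by
    rw [hβs, Matrix.mulVec_mulVec, Matrix.mulVec_mulVec,
      Matrix.mul_nonsing_inv _ ((Matrix.isUnit_iff_isUnit_det _).mp hX), Matrix.one_mulVec]
  -- βs maximizes the log-likelihood
  have hlik : ∀ β : Fin p → ℝ, glmLogLik X y b β ≤ glmLogLik X y b βs := by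
    intro β
    apply Finset.sum_le_sum
    intro i _
    rw [hXβs]
    exact tangent_le b hb hb'' (gy i) ((X *ᵥ β) i) (y i) (hgy i)
  set S : ℝ := ∑ j, βs j ^ 2 with hS
  have hbound : ∀ lam : ℝ, 0 < lam → ∑ j, βlam lam j ^ 2 ≤ S := by
    intro lam hlam
    have h1 := hmin lam hlam βs
    have h2 := hlik (βlam lam)
    simp only [ridgeObj] at h1
    nlinarith
  set C : ℝ := Real.sqrt S with hC
  have habs : ∀ lam : ℝ, 0 < lam → ∀ j, |βlam lam j| ≤ C := by
    intro lam hlam j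
    have h1 : βlam lam j ^ 2 ≤ S := by
      refine le_trans ?_ (hbound lam hlam)
      exact Finset.single_le_sum (f := fun k => βlam lam k ^ 2) (fun k _ => sq_nonneg _) (Finset.mem_univ j)
    calc |βlam lam j| = Real.sqrt (βlam lam j ^ 2) := (Real.sqrt_sq_eq_abs _).symm
      _ ≤ C := Real.sqrt_le_sqrt h1
  -- the score equals -lam • βlam lam for lam > 0
  have hscore : ∀ lam : ℝ, 0 < lam →
      (Xᵀ *ᵥ (fun i => deriv b ((X *ᵥ βlam lam) i) - y i)) =
        fun j => -(lam * βlam lam j) := by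
    intro lam hlam
    funext j
    have := stationary X y b hb lam (βlam lam) (hmin lam hlam) j
    rw [Matrix.mulVec, dotProduct]
    simpa [Matrix.transpose_apply] using this
  apply Tendsto.congr' (f₁ := fun lam : ℝ => fun j => -(lam * βlam lam j))
  · filter_upwards [self_mem_nhdsWithin] with lam hlam
    exact (hscore lam hlam).symm
  · rw [tendsto_pi_nhds]
    intro j
    simp only [Pi.zero_apply]
    apply squeeze_zero_norm' (a := fun lam => lam * C)
    · filter_upwards [self_mem_nhdsWithin] with lam (hlam : 0 < lam)
      rw [Real.norm_eq_abs, abs_neg, abs_mul, abs_of_pos hlam]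
      exact mul_le_mul_of_nonneg_left (habs lam hlam j) hlam.le
    · have : Tendsto (fun lam : ℝ => lam * C) (𝓝 0) (𝓝 (0 * C)) :=
        (continuous_id.mul continuous_const).tendsto 0
      simpa using this.mono_left nhdsWithin_le_nhds
end

section
/- Convergence of the fitted means and linear predictors. Assume XX' is invertible (rank(XX') = n) and g(y) is defined. For each λ > 0 let β_λ denote the unique global minimizer of the ridge objective f_λ over ℝ^p. Then b'(Xβ_λ) → y and Xβ_λ → g(y) in ℝ^n as λ → 0⁺. -/
open Matrix Filter Topology

/-- Convergence of fitted means and linear predictors: `b'(Xβ_λ) → y` and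
`Xβ_λ → g(y)` as `λ → 0⁺`. -/
theorem ridge_fitted_means_tendsto {n p : ℕ} (X : Matrix (Fin n) (Fin p) ℝ) (y : Fin n → ℝ)
    (b : ℝ → ℝ) (hb : ContDiff ℝ 2 b) (hb'' : ∀ θ : ℝ, 0 < deriv (deriv b) θ)
    (hX : IsUnit (X * Xᵀ))
    (gy : Fin n → ℝ) (hgy : ∀ i, deriv b (gy i) = y i)
    (βlam : ℝ → Fin p → ℝ)
    (hmin : ∀ lam : ℝ, 0 < lam → ∀ β : Fin p → ℝ,
      ridgeObj X y b lam (βlam lam) ≤ ridgeObj X y b lam β)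
    (huniq : ∀ lam : ℝ, 0 < lam → ∀ β : Fin p → ℝ,
      (∀ β' : Fin p → ℝ, ridgeObj X y b lam β ≤ ridgeObj X y b lam β') → β = βlam lam) :
    Tendsto (fun lam : ℝ => (fun i => deriv b ((X *ᵥ βlam lam) i))) (𝓝[>] (0 : ℝ)) (𝓝 y) ∧
    Tendsto (fun lam : ℝ => X *ᵥ βlam lam) (𝓝[>] (0 : ℝ)) (𝓝 gy) := by
  classical
  -- Basic facts about b
  have hbdiff : Differentiable ℝ b := hb.differentiable two_ne_zero
  have hb'diff : Differentiable ℝ (deriv b) := fun x =>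
    differentiableAt_of_deriv_ne_zero (ne_of_gt (hb'' x))
  have hb'cont : Continuous (deriv b) := hb'diff.continuous
  have hb'mono : StrictMono (deriv b) := strictMono_of_deriv_pos hb''
  -- The per-coordinate strictly convex functions
  set φ : Fin n → ℝ → ℝ := fun i θ => b θ - y i * θ with hφdef
  have hφdiff : ∀ i, Differentiable ℝ (φ i) := fun i =>
    hbdiff.sub ((differentiable_id.const_mul (y i)))
  have hφderiv : ∀ (i : Fin n) (θ : ℝ), deriv (φ i) θ = deriv b θ - y i := by
    intro i θ
    have h1 : DifferentiableAt ℝ (fun θ : ℝ => y i * θ) θ :=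
      (differentiable_id.const_mul (y i)) θ
    rw [hφdef]
    simp only []
    rw [deriv_fun_sub (hbdiff θ) h1]
    congr 1
    simpa using deriv_const_mul (y i) (differentiableAt_fun_id (x := θ))
  have hmonoOn : ∀ i, StrictMonoOn (φ i) (Set.Ici (gy i)) := by
    intro i
    apply strictMonoOn_of_deriv_pos (convex_Ici _) ((hφdiff i).continuous.continuousOn)
    intro x hx
    rw [interior_Ici] at hx
    rw [hφderiv]
    have h := hb'mono hx
    rw [hgy i] at h
    linarith
  have hantiOn : ∀ i, StrictAntiOn (φ i) (Set.Iic (gy i)) := by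
    intro i
    apply strictAntiOn_of_deriv_neg (convex_Iic _) ((hφdiff i).continuous.continuousOn)
    intro x hx
    rw [interior_Iic] at hx
    rw [hφderiv]
    have h := hb'mono hx
    rw [hgy i] at h
    linarith
  have hφmin : ∀ (i : Fin n) (θ : ℝ), φ i (gy i) ≤ φ i θ := by
    intro i θ
    rcases le_total (gy i) θ with h | h
    · exact (hmonoOn i).monotoneOn Set.self_mem_Ici (Set.mem_Ici.mpr h) h
    · exact (hantiOn i).antitoneOn (Set.mem_Iic.mpr h) Set.self_mem_Iic h
  -- A preimage of gy under X
  have hdet : IsUnit (X * Xᵀ).det := (Matrix.isUnit_iff_isUnit_det _).mp hX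
  set βs : Fin p → ℝ := Xᵀ *ᵥ ((X * Xᵀ)⁻¹ *ᵥ gy) with hβs
  have hXβs : X *ᵥ βs = gy := by
    rw [hβs, Matrix.mulVec_mulVec, Matrix.mulVec_mulVec,
      Matrix.mul_nonsing_inv _ hdet, Matrix.one_mulVec]
  -- The unpenalized objective
  set F : (Fin p → ℝ) → ℝ := fun β => ∑ i, φ i ((X *ᵥ β) i) with hFdef
  have hridge : ∀ (lam : ℝ) (β : Fin p → ℝ),
      ridgeObj X y b lam β = F β + lam / 2 * ∑ j, β j ^ 2 := by
    intro lam β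
    rw [ridgeObj, glmLogLik, hFdef]
    congr 1
    rw [← Finset.sum_neg_distrib]
    apply Finset.sum_congr rfl
    intro i _
    rw [hφdef]
    ring
  have hFβs : F βs = ∑ i, φ i (gy i) := by
    rw [hFdef]; simp only [hXβs]
  have hFmin : ∀ β, F βs ≤ F β := by
    intro β
    rw [hFβs]
    exact Finset.sum_le_sum fun i _ => hφmin i _
  set C : ℝ := ∑ j, βs j ^ 2 with hC
  have hCnn : 0 ≤ C := Finset.sum_nonneg fun j _ => sq_nonneg _
  -- The key bound from optimality of βlam
  have hkey : ∀ lam : ℝ, 0 < lam → ∀ i : Fin n,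
      φ i ((X *ᵥ βlam lam) i) - φ i (gy i) ≤ lam / 2 * C := by
    intro lam hl i
    have h0 := hmin lam hl βs
    rw [hridge, hridge] at h0
    have hβnn : 0 ≤ lam / 2 * ∑ j, (βlam lam) j ^ 2 :=
      mul_nonneg (by positivity) (Finset.sum_nonneg fun j _ => sq_nonneg _)
    have hsum : ∑ i, (φ i ((X *ᵥ βlam lam) i) - φ i (gy i)) ≤ lam / 2 * C := by
      rw [Finset.sum_sub_distrib]
      have h1 : F (βlam lam) = ∑ i, φ i ((X *ᵥ βlam lam) i) := rfl
      linarith [hFβs, h0]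
    have hsingle := Finset.single_le_sum
      (f := fun i => φ i ((X *ᵥ βlam lam) i) - φ i (gy i))
      (fun j _ => sub_nonneg.mpr (hφmin j _)) (Finset.mem_univ i)
    exact le_trans hsingle hsum
  -- Convergence of linear predictors
  have htend2 : Tendsto (fun lam : ℝ => X *ᵥ βlam lam) (𝓝[>] (0 : ℝ)) (𝓝 gy) := by
    rw [tendsto_pi_nhds]
    intro i
    rw [Metric.tendsto_nhds]
    intro ε hε
    set δ : ℝ := min (φ i (gy i + ε) - φ i (gy i)) (φ i (gy i - ε) - φ i (gy i)) with hδ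
    have hδpos : 0 < δ := by
      apply lt_min
      · have := (hmonoOn i) Set.self_mem_Ici
          (show gy i + ε ∈ Set.Ici (gy i) from Set.mem_Ici.mpr (by linarith))
          (show gy i < gy i + ε by linarith)
        linarith
      · have := (hantiOn i)
          (show gy i - ε ∈ Set.Iic (gy i) from Set.mem_Iic.mpr (by linarith))
          Set.self_mem_Iic (show gy i - ε < gy i by linarith)
        linarith
    have hmem : Set.Ioo (0 : ℝ) (2 * δ / (C + 1)) ∈ 𝓝[>] (0 : ℝ) :=
      Ioo_mem_nhdsGT_of_mem ⟨le_refl 0, by positivity⟩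
    filter_upwards [hmem] with lam hlam
    obtain ⟨hl0, hlr⟩ := hlam
    have hb1 := hkey lam hl0 i
    have hlamC : lam / 2 * C < δ := by
      have h2 : lam * (C + 1) < (2 * δ / (C + 1)) * (C + 1) :=
        mul_lt_mul_of_pos_right hlr (by positivity)
      have h3 : (2 * δ / (C + 1)) * (C + 1) = 2 * δ := by field_simp
      nlinarith
    have hsmall : φ i ((X *ᵥ βlam lam) i) - φ i (gy i) < δ := lt_of_le_of_lt hb1 hlamC
    rw [Real.dist_eq, abs_lt]
    constructor
    · by_contra h
      push_neg at h
      have hθ : (X *ᵥ βlam lam) i ≤ gy i - ε := by linarith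
      have hle := (hantiOn i).antitoneOn (Set.mem_Iic.mpr (by linarith))
        (Set.mem_Iic.mpr (by linarith : gy i - ε ≤ gy i)) hθ
      have hδle : δ ≤ φ i (gy i - ε) - φ i (gy i) := min_le_right _ _
      linarith
    · by_contra h
      push_neg at h
      have hθ : gy i + ε ≤ (X *ᵥ βlam lam) i := by linarith
      have hle := (hmonoOn i).monotoneOn (Set.mem_Ici.mpr (by linarith : gy i ≤ gy i + ε))
        (Set.mem_Ici.mpr (by linarith)) hθ
      have hδle : δ ≤ φ i (gy i + ε) - φ i (gy i) := min_le_left _ _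
      linarith
  -- Convergence of fitted means
  have hcontmap : Continuous fun v : Fin n → ℝ => fun i => deriv b (v i) :=
    continuous_pi fun i => hb'cont.comp (continuous_apply i)
  have htend1 : Tendsto (fun lam : ℝ => (fun i => deriv b ((X *ᵥ βlam lam) i)))
      (𝓝[>] (0 : ℝ)) (𝓝 (fun i => deriv b (gy i))) :=
    (hcontmap.tendsto gy).comp htend2
  have hval : (fun i => deriv b (gy i)) = y := funext hgy
  exact ⟨hval ▸ htend1, htend2⟩
end
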